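/- arXiv:1107.2848 — 4 statements merged into one kernel-verified Lean document; each statement's English description precedes it below -/
import Mathlib

section
/- Let $c > 0$, $\xi_0 > 0$ and $0 < \epsilon < \min\{c, \xi_0\}$. If a sequence of nonnegative reals $\{\theta_k\}$ satisfies $\theta_0 = \xi_0$, $\theta_{k+1} \leq \theta_k - \theta_k^2/c$ and $\theta_{k+1} \leq (1 - \epsilon/c)\theta_k$ for all $k$, then for any $\rho \in (0,1)$ and any natural number $K \geq \frac{c}{\epsilon}(1 + \log\frac{1}{\rho}) + 2 - \frac{c}{\xi_0}$, we have $\theta_K \leq \epsilon\rho$. -/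
/-!
While `θ_k` is large, the quadratic decrease `θ_{k+1} ≤ θ_k - θ_k²/c` forces
`1/θ_k ≥ 1/ξ₀ + k/c`, so `θ_k ≤ ε` after `k₁ = ⌈c/ε - c/ξ₀⌉` steps. From then on the linear
decrease contracts by `1 - ε/c ≤ exp (-ε/c)` per step, and `(c/ε) log (1/ρ)` further steps
gain the factor `ρ`.
-/

open Real

/-- Since `c a / (a + c) = 1 / (1/a + 1/c)`, this is the step `1/θ_{k+1} ≥ 1/θ_k + 1/c` of the
quadratic decrease, free of reciprocals so that `θ_k = 0` is allowed. -/
lemma sub_sq_div_le_of_le {c x a : ℝ} (hc : 0 < c) (hx : 0 ≤ x) (hxa : x ≤ a) :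
    x - x ^ 2 / c ≤ c * a / (a + c) := by
  have ha : 0 ≤ a := hx.trans hxa
  rw [show x - x ^ 2 / c = (c * x - x ^ 2) / c by field_simp, div_le_div_iff₀ hc (by positivity)]
  rcases le_total x c with hxc | hcx
  · -- the gap `c²a - (a + c)(cx - x²)` equals `a x² + c (a - x)(c - x)`
    nlinarith [mul_nonneg (mul_nonneg hc.le (sub_nonneg.2 hxa)) (sub_nonneg.2 hxc),
      mul_nonneg ha (sq_nonneg x)]
  · -- the same gap equals `(a + c) x (x - c) + c²a`
    nlinarith [mul_nonneg (mul_nonneg hx (sub_nonneg.2 hcx)) (add_nonneg ha hc.le),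
      mul_nonneg ha (sq_nonneg c)]

lemma le_of_quadratic_decrease {c : ℝ} (hc : 0 < c) {θ : ℕ → ℝ} (hnn : ∀ k, 0 ≤ θ k)
    (hrec : ∀ k, θ (k + 1) ≤ θ k - θ k ^ 2 / c) (k : ℕ) :
    θ k ≤ c * θ 0 / (k * θ 0 + c) := by
  have h0 := hnn 0
  induction k with
  | zero => simp [mul_div_cancel_left₀ _ hc.ne']
  | succ k ih =>
    calc θ (k + 1) ≤ c * (c * θ 0 / (k * θ 0 + c)) / (c * θ 0 / (k * θ 0 + c) + c) :=
          (hrec k).trans (sub_sq_div_le_of_le hc (hnn k) ih)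
      _ = c * θ 0 / ((k + 1 : ℕ) * θ 0 + c) := by
          push_cast
          field_simp
          ring

lemma one_sub_pow_le_of_log_le {t ρ : ℝ} {m : ℕ} (ht : t ≤ 1) (hρ : 0 < ρ)
    (hm : log (1 / ρ) ≤ t * m) : (1 - t) ^ m ≤ ρ :=
  calc (1 - t) ^ m ≤ exp (-t) ^ m := pow_le_pow_left₀ (by linarith) (one_sub_le_exp_neg t) m
    _ = exp (-(t * m)) := by rw [← exp_nat_mul]; ring_nf
    _ ≤ ρ := by
      rw [one_div, log_inv] at hm
      exact (exp_le_exp.2 (by linarith)).trans_eq (exp_log hρ)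

/-- Deterministic core of Theorem 1(i): combined quadratic- and linear-decrease
recursions yield `θ_K ≤ ε·ρ` after `K ≥ (c/ε)(1 + log(1/ρ)) + 2 - c/ξ₀` steps. -/
theorem stmt_1 (c ξ0 ε ρ : ℝ) (hc : 0 < c) (hξ0 : 0 < ξ0)
    (hε : 0 < ε) (hεc : ε < c) (hεξ0 : ε < ξ0) (hρ : ρ ∈ Set.Ioo (0 : ℝ) 1)
    (θ : ℕ → ℝ) (hnn : ∀ k, 0 ≤ θ k) (hθ0 : θ 0 = ξ0)
    (hrec1 : ∀ k, θ (k + 1) ≤ θ k - (θ k) ^ 2 / c)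
    (hrec2 : ∀ k, θ (k + 1) ≤ (1 - ε / c) * θ k)
    (K : ℕ) (hK : c / ε * (1 + Real.log (1 / ρ)) + 2 - c / ξ0 ≤ (K : ℝ)) :
    θ K ≤ ε * ρ := by
  obtain ⟨hρ0, hρ1⟩ := hρ
  have hlog : 0 ≤ log (1 / ρ) := log_nonneg (by rw [le_div_iff₀ hρ0]; linarith)
  set k₁ := ⌈c / ε - c / ξ0⌉₊
  have hk₁ : (k₁ : ℝ) < c / ε - c / ξ0 + 1 :=
    Nat.ceil_lt_add_one (sub_nonneg.2 (div_le_div_of_nonneg_left hc.le hε hεξ0.le))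
  have hθk₁ : θ k₁ ≤ ε := by
    refine (le_of_quadratic_decrease hc hnn hrec1 k₁).trans ?_
    rw [hθ0, div_le_iff₀ (by positivity)]
    have h := mul_le_mul_of_nonneg_right (Nat.le_ceil (c / ε - c / ξ0)) (mul_pos hε hξ0).le
    rw [show (c / ε - c / ξ0) * (ε * ξ0) = c * ξ0 - c * ε by field_simp] at h
    linarith
  have hk₁K : k₁ ≤ K := by
    exact_mod_cast (by nlinarith [div_pos hc hε] : (k₁ : ℝ) ≤ K)
  obtain ⟨m, rfl⟩ := Nat.exists_eq_add_of_le hk₁K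
  have hm : c / ε * log (1 / ρ) ≤ m := by push_cast at hK; nlinarith [div_pos hc hε]
  have hq : 0 ≤ 1 - ε / c := by rw [sub_nonneg, div_le_one hc]; exact hεc.le
  calc θ (k₁ + m) ≤ (1 - ε / c) ^ m * θ k₁ := le_geom (u := fun j ↦ θ (k₁ + j)) hq m
        fun j _ ↦ hrec2 (k₁ + j)
    _ ≤ ρ * ε := by
      refine mul_le_mul (one_sub_pow_le_of_log_le (by linarith) hρ0 ?_) hθk₁ (hnn _) hρ0.le
      rw [div_mul_eq_mul_div, div_le_iff₀ hε] at hm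
      rw [div_mul_eq_mul_div, le_div_iff₀ hc]
      linarith
    _ = ε * ρ := mul_comm ρ ε
end

section
/- Let $\{\xi_k\}_{k\geq 0}$ be a nonincreasing sequence of nonnegative random variables with $\xi_0 = $ a constant $> 0$, and suppose $\mathbf{E}[\xi_{k+1} \mid \xi_k] \leq (1 - 1/c)\xi_k$ for all $k$ with $\xi_k \geq \epsilon$, where $c > 1$ and $0 < \epsilon < \xi_0$. Then for any $\rho \in (0,1)$ and any $K \geq c\log\frac{\xi_0}{\epsilon\rho}$, $\mathbf{P}(\xi_K \leq \epsilon) \geq 1 - \rho$. -/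
/-!
Let `a k = ∫_{ξ_k ≥ ε} ξ_k`, the expectation of the thresholded variable `ξ_k^ε`. Since
`{ξ_{k+1} ≥ ε} ⊆ {ξ_k ≥ ε}` and the latter set is `σ(ξ_k)`-measurable, the tower property and
the conditional decrease give `a (k+1) ≤ (1 - 1/c) a k`, hence
`a K ≤ (1 - 1/c)^K ξ₀ ≤ e^{-K/c} ξ₀ ≤ ε ρ`. Markov's inequality `ε P(ξ_K ≥ ε) ≤ a K` finishes.
-/

open MeasureTheory

theorem one_sub_one_div_nonneg {c : ℝ} (hc : 1 ≤ c) : 0 ≤ 1 - 1 / c := by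
  rw [sub_nonneg, div_le_one (one_pos.trans_le hc)]
  exact hc

theorem one_sub_one_div_pow_mul_le {c x y : ℝ} {K : ℕ} (hc : 1 < c) (hx : 0 < x) (hy : 0 < y)
    (hK : c * Real.log (x / y) ≤ K) : (1 - 1 / c) ^ K * x ≤ y := by
  have hc0 : 0 < c := one_pos.trans hc
  calc (1 - 1 / c) ^ K * x ≤ Real.exp (-(1 / c)) ^ K * x := by
        gcongr
        · exact one_sub_one_div_nonneg hc.le
        · linarith [Real.add_one_le_exp (-(1 / c))]
    _ = Real.exp (-(K / c)) * x := by rw [← Real.exp_nat_mul]; ring_nf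
    _ ≤ Real.exp (-Real.log (x / y)) * x := by
        gcongr; rw [le_div_iff₀ hc0]; linarith
    _ = y := by rw [Real.exp_neg, Real.exp_log (by positivity)]; field_simp

section Probability

variable {Ω : Type*} {m m₀ : MeasurableSpace Ω} {μ : Measure Ω}

theorem setIntegral_le_mul_setIntegral_of_condExp_le (hm : m ≤ m₀) [SigmaFinite (μ.trim hm)]
    {X Y : Ω → ℝ} {s t : Set Ω} {q : ℝ} (hs : MeasurableSet[m] s) (hts : t ⊆ s)
    (hX : Integrable X μ) (hY : Integrable Y μ) (hY_nonneg : 0 ≤ᵐ[μ] Y)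
    (hcond : ∀ᵐ ω ∂μ, ω ∈ s → μ[Y | m] ω ≤ q * X ω) :
    ∫ ω in t, Y ω ∂μ ≤ q * ∫ ω in s, X ω ∂μ :=
  calc ∫ ω in t, Y ω ∂μ ≤ ∫ ω in s, Y ω ∂μ :=
        setIntegral_mono_set hY.integrableOn (ae_restrict_of_ae hY_nonneg) hts.eventuallyLE
    _ = ∫ ω in s, μ[Y | m] ω ∂μ := (setIntegral_condExp hm hY hs).symm
    _ ≤ ∫ ω in s, q * X ω ∂μ := by
        refine setIntegral_mono_ae_restrict integrable_condExp.integrableOn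
          (hX.const_mul q).integrableOn ?_
        rw [Filter.EventuallyLE, ae_restrict_iff' (hm s hs)]
        exact hcond
    _ = q * ∫ ω in s, X ω ∂μ := integral_const_mul q _

theorem ofReal_one_sub_le_measure_compl [IsProbabilityMeasure μ] {s : Set Ω} {ρ : ℝ}
    (hs : MeasurableSet s) (hρ : μ.real s ≤ ρ) : ENNReal.ofReal (1 - ρ) ≤ μ sᶜ := by
  rw [← ofReal_measureReal (measure_ne_top μ sᶜ), probReal_compl_eq_one_sub hs]
  exact ENNReal.ofReal_le_ofReal (by linarith)

end Probability

theorem stmt_4_general {Ω : Type*} [MeasurableSpace Ω] (μ : Measure Ω)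
    [IsProbabilityMeasure μ]
    (ξ : ℕ → Ω → ℝ) (hmeas : ∀ k, Measurable (ξ k))
    (hint : ∀ k, Integrable (ξ k) μ)
    (hnn : ∀ k ω, 0 ≤ ξ k ω) (hmono : ∀ k ω, ξ (k + 1) ω ≤ ξ k ω)
    (ξ0 c ε ρ : ℝ) (hξ0 : ∀ ω, ξ 0 ω = ξ0) (hξ0pos : 0 < ξ0)
    (hc : 1 < c) (hε : 0 < ε) (hρ : ρ ∈ Set.Ioo (0 : ℝ) 1)
    (hcond : ∀ k, ∀ᵐ ω ∂μ, ε ≤ ξ k ω →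
      (μ[ξ (k + 1) | MeasurableSpace.comap (ξ k) Real.measurableSpace]) ω ≤
        (1 - 1 / c) * ξ k ω)
    (K : ℕ) (hK : c * Real.log (ξ0 / (ε * ρ)) ≤ (K : ℝ)) :
    ENNReal.ofReal (1 - ρ) ≤ μ {ω | ξ K ω ≤ ε} := by
  set a : ℕ → ℝ := fun k => ∫ ω in {ω | ε ≤ ξ k ω}, ξ k ω ∂μ
  have hq := one_sub_one_div_nonneg hc.le
  have hstep (k : ℕ) : a (k + 1) ≤ (1 - 1 / c) * a k :=
    setIntegral_le_mul_setIntegral_of_condExp_le (hmeas k).comap_le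
      ⟨Set.Ici ε, measurableSet_Ici, rfl⟩ (fun ω hω => le_trans hω (hmono k ω))
      (hint k) (hint (k + 1)) (Filter.Eventually.of_forall (hnn (k + 1))) (hcond k)
  have ha₀ : a 0 ≤ ξ0 := by
    calc a 0 ≤ ∫ ω, ξ 0 ω ∂μ :=
          setIntegral_le_integral (hint 0) (Filter.Eventually.of_forall (hnn 0))
      _ = ξ0 := by simp [hξ0]
  have hA : MeasurableSet {ω | ε ≤ ξ K ω} := hmeas K measurableSet_Ici
  have hmarkov : ε * μ.real {ω | ε ≤ ξ K ω} ≤ ε * ρ :=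
    calc ε * μ.real {ω | ε ≤ ξ K ω} ≤ a K :=
          setIntegral_ge_of_const_le_real hA (measure_ne_top μ _) (fun _ h => h)
            (hint K).integrableOn
      _ ≤ (1 - 1 / c) ^ K * a 0 := le_geom hq K fun k _ => hstep k
      _ ≤ (1 - 1 / c) ^ K * ξ0 := by gcongr
      _ ≤ ε * ρ := one_sub_one_div_pow_mul_le hc hξ0pos (mul_pos hε hρ.1) hK
  calc ENNReal.ofReal (1 - ρ) ≤ μ {ω | ε ≤ ξ K ω}ᶜ :=
        ofReal_one_sub_le_measure_compl hA (le_of_mul_le_mul_left hmarkov hε)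
    _ ≤ μ {ω | ξ K ω ≤ ε} := measure_mono fun ω (hω : ¬ε ≤ ξ K ω) => (not_le.mp hω).le

/-- Theorem 1(ii): a nonincreasing nonnegative sequence of random variables with
conditional geometric decrease on `{ξ_k ≥ ε}` satisfies
`P(ξ_K ≤ ε) ≥ 1 - ρ` once `K ≥ c·log(ξ₀/(ε·ρ))`. -/
theorem stmt_4 {Ω : Type*} [MeasurableSpace Ω] (μ : Measure Ω)
    [IsProbabilityMeasure μ]
    (ξ : ℕ → Ω → ℝ) (hmeas : ∀ k, Measurable (ξ k))
    (hint : ∀ k, Integrable (ξ k) μ)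
    (hnn : ∀ k ω, 0 ≤ ξ k ω) (hmono : ∀ k ω, ξ (k + 1) ω ≤ ξ k ω)
    (ξ0 c ε ρ : ℝ) (hξ0 : ∀ ω, ξ 0 ω = ξ0) (hξ0pos : 0 < ξ0)
    (hc : 1 < c) (hε : 0 < ε) (hεξ0 : ε < ξ0) (hρ : ρ ∈ Set.Ioo (0 : ℝ) 1)
    (hcond : ∀ k, ∀ᵐ ω ∂μ, ε ≤ ξ k ω →
      (μ[ξ (k + 1) | MeasurableSpace.comap (ξ k) Real.measurableSpace]) ω ≤
        (1 - 1 / c) * ξ k ω)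
    (K : ℕ) (hK : c * Real.log (ξ0 / (ε * ρ)) ≤ (K : ℝ)) :
    ENNReal.ofReal (1 - ρ) ≤ μ {ω | ξ K ω ≤ ε} :=
  stmt_4_general μ ξ hmeas hint hnn hmono ξ0 c ε ρ hξ0 hξ0pos hc hε hρ hcond K hK
end

section
/- Let $F = f + \Psi$ be strongly convex with respect to $\|\cdot\|_L$ with parameter $\mu > 0$, with minimizer $x^*$ and minimum $F^*$, and suppose $f$ is convex differentiable. With $H(x,T) = f(x) + \langle\nabla f(x), T\rangle + \frac{1}{2}\|T\|_L^2 + \Psi(x+T)$, one has $\min_T H(x,T) - F^* \leq \gamma_\mu (F(x) - F^*)$, where $\gamma_\mu = 1 - \mu/4$ if $\mu \leq 2$ and $\gamma_\mu = 1/\mu$ otherwise. -/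
/-!
On the segment `T = α • (x* - x)`, `α ∈ [0, 1]`, convexity of `f` and `Ψ` bounds the model by
`F x - α (F x - F*) + α² / 2 ‖x - x*‖_L²`, and strong convexity gives the quadratic growth
`μ / 2 ‖x - x*‖_L² ≤ F x - F*`; together the model exceeds `F*` by at most
`(1 - α + α² / μ) (F x - F*)`, which `α = min 1 (μ / 2)` turns into `γ_μ (F x - F*)`.
The model values are bounded below, so `sInf` is not the junk value `0`: in finite dimension
`‖·‖_L` dominates a multiple of the ambient norm, so the quadratic term beats an affine minorant
of the convex part of the model.
-/

open Set Matrix Filter Topology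

section NormedSpace

variable {E : Type*} [NormedAddCommGroup E] [NormedSpace ℝ E]

theorem exists_pos_mul_norm_le_of_continuous [FiniteDimensional ℝ E] {p : E → ℝ}
    (hp : Continuous p) (hsmul : ∀ (a : ℝ) x, p (a • x) = |a| * p x)
    (hpos : ∀ x ≠ 0, 0 < p x) : ∃ ε > 0, ∀ x, ε * ‖x‖ ≤ p x := by
  have hp0 : p 0 = 0 := by simpa using hsmul 0 0
  rcases subsingleton_or_nontrivial E with _ | _
  · exact ⟨1, one_pos, fun x => by simp [Subsingleton.elim x 0, hp0]⟩
  obtain ⟨u, hu, hmin⟩ := (isCompact_sphere (0 : E) 1).exists_isMinOn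
    (NormedSpace.sphere_nonempty.2 zero_le_one) hp.continuousOn
  refine ⟨p u, hpos u (ne_zero_of_mem_unit_sphere ⟨u, hu⟩), fun x => ?_⟩
  rcases eq_or_ne x 0 with rfl | hx
  · simp [hp0]
  have hx' : 0 < ‖x‖ := norm_pos_iff.2 hx
  have hux : p u ≤ p (‖x‖⁻¹ • x) := hmin (by simpa using norm_smul_inv_norm (𝕜 := ℝ) hx)
  rw [hsmul, abs_of_pos (inv_pos.2 hx'), le_inv_mul_iff₀ hx'] at hux
  linarith

theorem ConvexOn.bddBelow_range_add_sq {φ p : E → ℝ} (hφ : ConvexOn ℝ univ φ)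
    (hφc : LowerSemicontinuous φ) {ε : ℝ} (hε : 0 < ε) (hp : ∀ x, ε * ‖x‖ ≤ p x) :
    BddBelow (range fun x => φ x + p x ^ 2 / 2) := by
  obtain ⟨l, c, hl, -⟩ := hφ.exists_affine_le_of_lt (𝕜 := ℝ) (mem_univ 0)
    (sub_one_lt (φ 0)) isClosed_univ (hφc.lowerSemicontinuousOn univ)
  set K := ‖l‖ / ε
  refine ⟨c - K ^ 2 / 2, ?_⟩
  rintro _ ⟨x, rfl⟩
  have hlx : l x + c ≤ φ x := by simpa using hl ⟨x, mem_univ x⟩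
  have hl_bound : -(K * p x) ≤ l x := by
    have h1 : |l x| ≤ ‖l‖ * ‖x‖ := l.le_opNorm x
    have h2 : ‖l‖ * ‖x‖ ≤ K * p x := by
      calc ‖l‖ * ‖x‖ = ‖l‖ / ε * (ε * ‖x‖) := by field_simp
        _ ≤ K * p x := by gcongr; exact hp x
    linarith [neg_abs_le (l x)]
  nlinarith [sq_nonneg (p x - K)]

end NormedSpace

section VectorSpace

variable {E : Type*} [AddCommGroup E] [Module ℝ E]

theorem quadratic_growth_of_strong_subgradient {F : E → ℝ} {D : E → E →ₗ[ℝ] ℝ} {nrm : E → ℝ}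
    (hn : ∀ (a : ℝ) t, nrm (a • t) = |a| * nrm t) {μ : ℝ}
    (hsc : ∀ x y, F y + D y (x - y) + μ / 2 * nrm (x - y) ^ 2 ≤ F x)
    {xstar : E} (hmin : ∀ y, F xstar ≤ F y) (x : E) :
    μ / 2 * nrm (x - xstar) ^ 2 ≤ F x - F xstar := by
  -- `D xstar` need not vanish, so compare through `z = xstar + t • (x - xstar)` and let `t → 0`.
  have hsegment : ∀ t ∈ Ioo (0 : ℝ) 1, μ / 2 * nrm (x - xstar) ^ 2 * (1 - t) ≤ F x - F xstar := by
    rintro t ⟨ht0, ht1⟩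
    set z := xstar + t • (x - xstar)
    have hxz : x - z = (1 - t) • (x - xstar) := by simp only [z]; module
    have hsz : xstar - z = (-t) • (x - xstar) := by simp only [z]; module
    have hback := hsc xstar z
    have hfwd := hsc x z
    rw [hsz, map_smul, hn, abs_neg, abs_of_pos ht0, smul_eq_mul] at hback
    rw [hxz, map_smul, hn, abs_of_pos (sub_pos.2 ht1), smul_eq_mul] at hfwd
    have hz := hmin z
    set s := D z (x - xstar)
    have hs : μ / 2 * t * nrm (x - xstar) ^ 2 ≤ s := by
      refine le_of_mul_le_mul_left ?_ ht0
      nlinarith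
    nlinarith [mul_le_mul_of_nonneg_left hs (sub_nonneg.2 ht1.le)]
  have hlim : Tendsto (fun t : ℝ => μ / 2 * nrm (x - xstar) ^ 2 * (1 - t)) (𝓝[>] 0)
      (𝓝 (μ / 2 * nrm (x - xstar) ^ 2)) := by
    refine tendsto_nhdsWithin_of_tendsto_nhds ?_
    exact (Continuous.tendsto' (by fun_prop) 0 _ (by simp))
  exact le_of_tendsto hlim (eventually_of_mem (Ioo_mem_nhdsGT one_pos) hsegment)

theorem model_at_segment_le {f Ψ : E → ℝ} {ℓ : E →ₗ[ℝ] ℝ} {nrm : E → ℝ}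
    (hn : ∀ (a : ℝ) t, nrm (a • t) = |a| * nrm t) (hΨ : ConvexOn ℝ univ Ψ) {x y : E}
    (hf : f x + ℓ (y - x) ≤ f y) {α : ℝ} (hα0 : 0 ≤ α) (hα1 : α ≤ 1) :
    f x + ℓ (α • (y - x)) + nrm (α • (y - x)) ^ 2 / 2 + Ψ (x + α • (y - x))
      ≤ f x + Ψ x - α * (f x + Ψ x - (f y + Ψ y)) + α ^ 2 / 2 * nrm (y - x) ^ 2 := by
  have hΨα : Ψ (x + α • (y - x)) ≤ (1 - α) * Ψ x + α * Ψ y := by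
    have hconv := hΨ.2 (mem_univ x) (mem_univ y) (sub_nonneg.2 hα1) hα0 (sub_add_cancel 1 α)
    rwa [smul_eq_mul, smul_eq_mul, ← show x + α • (y - x) = (1 - α) • x + α • y by module]
      at hconv
  rw [map_smul, hn, abs_of_nonneg hα0, smul_eq_mul]
  nlinarith

end VectorSpace

/-- Lemma 5: for `F = f + Ψ` strongly convex w.r.t. `‖·‖_L` with parameter `μ > 0`
(`f` convex differentiable with gradient `g`), with
`H(x,T) = f(x) + ⟨g(x),T⟩ + ‖T‖_L²/2 + Ψ(x+T)`,
`min_T H(x,T) - F* ≤ γ_μ (F(x) - F*)` where `γ_μ = 1 - μ/4` if `μ ≤ 2`,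
`γ_μ = 1/μ` otherwise. -/
theorem stmt_11 (N : ℕ) (f Ψ : (Fin N → ℝ) → ℝ) (g : (Fin N → ℝ) → Fin N → ℝ)
    (nrmL : (Fin N → ℝ) → ℝ)
    (hn1 : ∀ t, 0 ≤ nrmL t) (hn2 : ∀ t, nrmL t = 0 ↔ t = 0)
    (hn3 : ∀ (a : ℝ) t, nrmL (a • t) = |a| * nrmL t)
    (hn4 : ∀ s t, nrmL (s + t) ≤ nrmL s + nrmL t)
    (hΨ : ConvexOn ℝ Set.univ Ψ)
    (hfconv : ∀ x y : Fin N → ℝ, f x + (∑ j, g x j * (y j - x j)) ≤ f y)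
    (μ : ℝ) (hμ : 0 < μ)
    (F' : (Fin N → ℝ) → Fin N → ℝ)
    (hsc : ∀ x y : Fin N → ℝ,
      (f y + Ψ y) + (∑ j, F' y j * (x j - y j)) + μ / 2 * nrmL (x - y) ^ 2
        ≤ f x + Ψ x)
    (xstar : Fin N → ℝ) (hmin : ∀ y, f xstar + Ψ xstar ≤ f y + Ψ y)
    (x : Fin N → ℝ) :
    sInf {r : ℝ | ∃ T : Fin N → ℝ,
        r = f x + (∑ j, g x j * T j) + nrmL T ^ 2 / 2 + Ψ (x + T)}
      - (f xstar + Ψ xstar) ≤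
      (if μ ≤ 2 then 1 - μ / 4 else 1 / μ) * (f x + Ψ x - (f xstar + Ψ xstar)) := by
  set S := {r : ℝ | ∃ T : Fin N → ℝ,
    r = f x + (∑ j, g x j * T j) + nrmL T ^ 2 / 2 + Ψ (x + T)}
  set Δ := f x + Ψ x - (f xstar + Ψ xstar)
  have hgrowth : μ / 2 * nrmL (x - xstar) ^ 2 ≤ Δ :=
    quadratic_growth_of_strong_subgradient (D := fun y => dotProductBilin ℝ ℝ (F' y)) hn3
      hsc hmin x
  have hnrm_continuous : Continuous nrmL :=
    (Seminorm.of (𝕜 := ℝ) nrmL hn4 hn3).convexOn.locallyLipschitz.continuous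
  obtain ⟨ε, hε, hε_le⟩ := exists_pos_mul_norm_le_of_continuous hnrm_continuous hn3
    fun t ht => (hn1 t).lt_of_ne fun h => ht ((hn2 t).1 h.symm)
  have hφ : ConvexOn ℝ univ fun T => f x + (∑ j, g x j * T j) + Ψ (x + T) :=
    ((convexOn_const (f x) convex_univ).add
      (LinearMap.convexOn (dotProductBilin ℝ ℝ (g x)) convex_univ)).add (hΨ.translate_right x)
  have hbdd : BddBelow S :=
    (hφ.bddBelow_range_add_sq hφ.locallyLipschitz.continuous.lowerSemicontinuous hε hε_le).mono
      (by rintro _ ⟨T, rfl⟩; exact ⟨T, by ring⟩)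
  have hstep : ∀ α, 0 ≤ α → α ≤ 1 →
      sInf S ≤ f x + Ψ x - α * Δ + α ^ 2 / 2 * nrmL (x - xstar) ^ 2 := by
    intro α hα0 hα1
    have hsymm : nrmL (xstar - x) = nrmL (x - xstar) := by
      rw [← neg_sub, ← neg_one_smul ℝ, hn3, abs_neg, abs_one, one_mul]
    have hmodel := model_at_segment_le (ℓ := dotProductBilin ℝ ℝ (g x)) hn3 hΨ
      (hfconv x xstar) hα0 hα1
    rw [hsymm] at hmodel
    exact (csInf_le hbdd ⟨α • (xstar - x), rfl⟩).trans hmodel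
  split_ifs with hμ2
  · have hquarter : μ ^ 2 / 8 * nrmL (x - xstar) ^ 2 ≤ μ / 4 * Δ := by nlinarith
    linarith [hstep (μ / 2) (by positivity) (by linarith)]
  · have hhalf : nrmL (x - xstar) ^ 2 / 2 ≤ 1 / μ * Δ := by
      rw [one_div_mul_eq_div, le_div_iff₀ hμ]
      linarith
    linarith [hstep 1 zero_le_one le_rfl]
end

section
/- Suppose a sequence of nonnegative reals $\{\theta_k\}$ satisfies $\theta_{k+1} \leq \theta_k - \frac{\theta_k^2}{2R^2}$ for a constant $R > 0$, with $\theta_0 \leq \frac{1}{2}R^2$. Then for any $\epsilon \in (0, \theta_0)$ and $k \geq \frac{2R^2}{\epsilon} - 4$, we have $\theta_k \leq \epsilon$. -/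
/-! Writing `a = 2R²`, each step of `θ_{k+1} ≤ θ_k (1 - θ_k / a)` raises the reciprocal by at least
`1 / a`, because `(1 - t)⁻¹ ≥ 1 + t`.  Hence `1 / θ_k ≥ 1 / θ_0 + k / a`, and `θ_0 ≤ a / 4` turns
`k ≥ a / ε - 4` into `k ≥ a / ε - a / θ_0`, which is exactly what `θ_k ≤ ε` needs. -/

lemma inv_add_inv_le_inv_of_le_sub_sq {a x y : ℝ} (ha : 0 < a) (hx : 0 < x)
    (h : x ≤ y - y ^ 2 / a) : y⁻¹ + a⁻¹ ≤ x⁻¹ := by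
  have hy : 0 < y := by nlinarith [div_nonneg (sq_nonneg y) ha.le]
  have hya : y < a := by
    by_contra! hay
    have : y ^ 2 / a ≥ y := by rw [ge_iff_le, le_div_iff₀ ha]; nlinarith
    linarith
  have hyx : y - y ^ 2 / a = y * (a - y) / a := by field_simp
  have hsplit : a / (y * (a - y)) = y⁻¹ + a⁻¹ + y / (a * (a - y)) := by
    field_simp [(sub_pos.2 hya).ne']
    ring
  calc y⁻¹ + a⁻¹ ≤ a / (y * (a - y)) := by
        rw [hsplit]
        exact le_add_of_nonneg_right (div_nonneg hy.le (mul_pos ha (sub_pos.2 hya)).le)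
    _ = (y - y ^ 2 / a)⁻¹ := by rw [hyx, inv_div]
    _ ≤ x⁻¹ := inv_anti₀ hx h

variable {a : ℝ} {θ : ℕ → ℝ}

lemma inv_add_div_le_inv_of_le_sub_sq (ha : 0 < a) (hrec : ∀ k, θ (k + 1) ≤ θ k - θ k ^ 2 / a) :
    ∀ k, 0 < θ k → (θ 0)⁻¹ + k / a ≤ (θ k)⁻¹
  | 0, _ => by simp
  | k + 1, hpos => by
    have hle : θ (k + 1) ≤ θ k := (hrec k).trans (sub_le_self _ (by positivity))
    have ih := inv_add_div_le_inv_of_le_sub_sq ha hrec k (hpos.trans_le hle)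
    have hstep := inv_add_inv_le_inv_of_le_sub_sq ha hpos (hrec k)
    push_cast
    rw [add_div, one_div, ← add_assoc]
    linarith

lemma le_inv_inv_add_div_of_le_sub_sq (ha : 0 < a) (hrec : ∀ k, θ (k + 1) ≤ θ k - θ k ^ 2 / a)
    (h0 : 0 < θ 0) (k : ℕ) : θ k ≤ ((θ 0)⁻¹ + k / a)⁻¹ := by
  rcases le_or_gt (θ k) 0 with hk | hk
  · exact hk.trans (by positivity)
  · exact (le_inv_comm₀ hk (by positivity)).2 (inv_add_div_le_inv_of_le_sub_sq ha hrec k hk)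

theorem stmt_16_general (R : ℝ) (θ : ℕ → ℝ)
    (hrec : ∀ k, θ (k + 1) ≤ θ k - (θ k) ^ 2 / (2 * R ^ 2))
    (hθ0 : θ 0 ≤ R ^ 2 / 2)
    (ε : ℝ) (hε : ε ∈ Set.Ioo (0 : ℝ) (θ 0))
    (k : ℕ) (hk : 2 * R ^ 2 / ε - 4 ≤ (k : ℝ)) :
    θ k ≤ ε := by
  obtain ⟨hε0, hεθ⟩ := hε
  have h0 : 0 < θ 0 := hε0.trans hεθ
  have ha : 0 < 2 * R ^ 2 := by linarith
  have hinv0 : 4 / (2 * R ^ 2) ≤ (θ 0)⁻¹ := by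
    rw [div_le_iff₀ ha, inv_mul_eq_div, le_div_iff₀ h0]
    linarith
  have hcount : ε⁻¹ ≤ (θ 0)⁻¹ + k / (2 * R ^ 2) := by
    have := div_le_div_of_nonneg_right hk ha.le
    rw [sub_div, div_div_cancel_left' ha.ne'] at this
    linarith
  calc θ k ≤ ((θ 0)⁻¹ + k / (2 * R ^ 2))⁻¹ := le_inv_inv_add_div_of_le_sub_sq ha hrec h0 k
    _ ≤ ε⁻¹⁻¹ := inv_anti₀ (by positivity) hcount
    _ = ε := inv_inv ε

/-- If `θ_{k+1} ≤ θ_k - θ_k²/(2R²)` with `θ₀ ≤ R²/2`, then for `ε ∈ (0, θ₀)` and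
`k ≥ 2R²/ε - 4` we have `θ_k ≤ ε`. -/
theorem stmt_16 (R : ℝ) (hR : 0 < R) (θ : ℕ → ℝ) (hnn : ∀ k, 0 ≤ θ k)
    (hrec : ∀ k, θ (k + 1) ≤ θ k - (θ k) ^ 2 / (2 * R ^ 2))
    (hθ0 : θ 0 ≤ R ^ 2 / 2)
    (ε : ℝ) (hε : ε ∈ Set.Ioo (0 : ℝ) (θ 0))
    (k : ℕ) (hk : 2 * R ^ 2 / ε - 4 ≤ (k : ℝ)) :
    θ k ≤ ε :=
  stmt_16_general R θ hrec hθ0 ε hε k hk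
end
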